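/- (Hoeffding-type inequality under negative association.) Suppose W₁, …, W_N are negatively associated, mean-zero random variables each satisfying E[exp(Wᵢ²)] ≤ K₀ for a constant K₀. Then there exist positive constants C₃ and C₄ depending only on K₀ such that for every a ≥ 0 and all reals γ₁, …, γ_N, P(|∑_{i=1}^N Wᵢ γᵢ| ≥ a) ≤ C₃ exp{−a² / (C₄ ∑_{i=1}^N γᵢ²)}. One may take C₃ = 4 and C₄ = 32(1 + σ₀²) where σ₀² = K₀ − 1. -/

import Mathlib

open MeasureTheory

/-- Negative association: for every pair of disjoint index sets and coordinate-wise
increasing functions, the covariance is nonpositive, i.e. `E[f₁ f₂] ≤ E[f₁] E[f₂]`. -/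
def NegAssoc {Ω : Type*} [MeasurableSpace Ω] (ℙ : Measure Ω) {N : ℕ}
    (X : Fin N → Ω → ℝ) : Prop :=
  ∀ (A₁ A₂ : Finset (Fin N)), Disjoint A₁ A₂ →
    ∀ (f₁ : (A₁ → ℝ) → ℝ) (f₂ : (A₂ → ℝ) → ℝ), Monotone f₁ → Monotone f₂ →
      Integrable (fun ω => f₁ fun i => X i.1 ω) ℙ →
      Integrable (fun ω => f₂ fun i => X i.1 ω) ℙ →
      Integrable (fun ω => (f₁ fun i => X i.1 ω) * (f₂ fun i => X i.1 ω)) ℙ →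
      ∫ ω, (f₁ fun i => X i.1 ω) * (f₂ fun i => X i.1 ω) ∂ℙ
        ≤ (∫ ω, (f₁ fun i => X i.1 ω) ∂ℙ) * ∫ ω, (f₂ fun i => X i.1 ω) ∂ℙ

/-!
Under negative association the moment generating function of a sum is at most the product of
the individual ones: for `t ≥ 0` (resp. `t ≤ 0`) the maps `x ↦ exp (t * ∑ i ∈ A, x i)` are
monotone (resp. antitone) in each coordinate, so the covariance inequality peels off one index
at a time. Hence, exactly as for independent variables, a sum of negatively associated
sub-Gaussian variables is sub-Gaussian with the summed variance proxies. The moment bound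
`E[exp W²] ≤ K` makes each `W` sub-Gaussian with variance proxy `4K` (Lemma 8.1 of van de Geer).
Since negative association only survives multiplication by coefficients of one sign, `γ` is split
into its positive and negative parts, and each part gets a two-sided Chernoff bound at level
`a / 2`.
-/

open Real
-- A full `open ProbabilityTheory` would make `ℙ`, used as a binder name, its notation.
open ProbabilityTheory (mgf HasSubgaussianMGF)
open scoped NNReal

section SubGaussian

variable {Ω : Type*} [MeasurableSpace Ω] {μ : Measure Ω} {X : Ω → ℝ}

lemma exp_le_add_exp_sq (x : ℝ) : exp x ≤ x + exp (x ^ 2) := by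
  have hsq : x ^ 2 + 1 ≤ exp (x ^ 2) := add_one_le_exp _
  rcases le_or_gt |x| 1 with hx | hx
  · linarith [(abs_le.1 (abs_exp_sub_one_sub_id_le hx)).2]
  rcases le_or_gt 0 x with hx₀ | hx₀
  · have : x ≤ x ^ 2 := by nlinarith [abs_of_nonneg hx₀]
    linarith [exp_le_exp.2 this]
  · nlinarith [exp_le_one_iff.2 hx₀.le, abs_of_neg hx₀]

lemma exp_mul_le_exp_sq_div_four_mul_exp_sq (t x : ℝ) :
    exp (t * x) ≤ exp (t ^ 2 / 4) * exp (x ^ 2) := by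
  rw [← exp_add]
  exact exp_le_exp.2 (by nlinarith [sq_nonneg (t / 2 - x)])

lemma integrable_exp_mul_of_integrable_exp_sq (hX : AEStronglyMeasurable X μ)
    (h : Integrable (fun ω => exp (X ω ^ 2)) μ) (t : ℝ) :
    Integrable (fun ω => exp (t * X ω)) μ :=
  (h.const_mul (exp (t ^ 2 / 4))).mono' (continuous_exp.comp_aestronglyMeasurable (hX.const_mul t))
    (ae_of_all _ fun ω => by
      rw [norm_of_nonneg (exp_pos _).le]
      exact exp_mul_le_exp_sq_div_four_mul_exp_sq t (X ω))

lemma one_le_integral_exp_sq [IsProbabilityMeasure μ] (h : Integrable (fun ω => exp (X ω ^ 2)) μ) :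
    1 ≤ ∫ ω, exp (X ω ^ 2) ∂μ :=
  calc (1 : ℝ) = ∫ _, (1 : ℝ) ∂μ := by simp
    _ ≤ ∫ ω, exp (X ω ^ 2) ∂μ :=
      integral_mono (integrable_const 1) h fun ω => one_le_exp (sq_nonneg _)

lemma mgf_le_one_add_sq_mul [IsProbabilityMeasure μ] (hX : Integrable X μ)
    (hmean : ∫ ω, X ω ∂μ = 0) (h : Integrable (fun ω => exp (X ω ^ 2)) μ) {t : ℝ}
    (ht : t ^ 2 ≤ 1) :
    mgf X μ t ≤ 1 + t ^ 2 * (∫ ω, exp (X ω ^ 2) ∂μ - 1) := by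
  have hpt : ∀ ω, exp (t * X ω) ≤ t * X ω + (t ^ 2 * exp (X ω ^ 2) + (1 - t ^ 2)) := by
    intro ω
    have hconv := convexOn_exp.2 (Set.mem_univ (X ω ^ 2)) (Set.mem_univ 0) (sq_nonneg t)
      (sub_nonneg.2 ht) (add_sub_cancel _ 1)
    simp only [smul_eq_mul, mul_zero, add_zero, exp_zero, mul_one] at hconv
    have := exp_le_add_exp_sq (t * X ω)
    rw [mul_pow] at this
    linarith
  have hint : Integrable (fun ω => t ^ 2 * exp (X ω ^ 2) + (1 - t ^ 2)) μ :=
    (h.const_mul _).add (integrable_const _)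
  calc mgf X μ t ≤ ∫ ω, t * X ω + (t ^ 2 * exp (X ω ^ 2) + (1 - t ^ 2)) ∂μ :=
        integral_mono (integrable_exp_mul_of_integrable_exp_sq hX.aestronglyMeasurable h t)
          ((hX.const_mul t).add hint) hpt
    _ = 1 + t ^ 2 * (∫ ω, exp (X ω ^ 2) ∂μ - 1) := by
        rw [integral_add (hX.const_mul t) hint, integral_add (h.const_mul _) (integrable_const _),
          integral_const_mul, integral_const_mul, hmean, integral_const]
        simp only [probReal_univ, smul_eq_mul, one_mul]
        ring

lemma mgf_le_exp_sq_div_four_mul (hX : AEStronglyMeasurable X μ)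
    (h : Integrable (fun ω => exp (X ω ^ 2)) μ) (t : ℝ) :
    mgf X μ t ≤ exp (t ^ 2 / 4) * ∫ ω, exp (X ω ^ 2) ∂μ := by
  rw [← integral_const_mul]
  exact integral_mono (integrable_exp_mul_of_integrable_exp_sq hX h t) (h.const_mul _)
    fun ω => exp_mul_le_exp_sq_div_four_mul_exp_sq t (X ω)

theorem hasSubgaussianMGF_of_integral_exp_sq_le [IsProbabilityMeasure μ] (hX : Integrable X μ)
    (hmean : ∫ ω, X ω ∂μ = 0) (h : Integrable (fun ω => exp (X ω ^ 2)) μ) {K : ℝ}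
    (hK : ∫ ω, exp (X ω ^ 2) ∂μ ≤ K) :
    HasSubgaussianMGF X (4 * K).toNNReal μ where
  integrable_exp_mul := integrable_exp_mul_of_integrable_exp_sq hX.aestronglyMeasurable h
  mgf_le t := by
    have hK₁ : 1 ≤ K := (one_le_integral_exp_sq h).trans hK
    rw [Real.coe_toNNReal _ (by linarith)]
    rcases le_or_gt (t ^ 2) 1 with ht | ht
    · calc mgf X μ t ≤ 1 + t ^ 2 * (∫ ω, exp (X ω ^ 2) ∂μ - 1) :=
            mgf_le_one_add_sq_mul hX hmean h ht
        _ ≤ 1 + t ^ 2 * (K - 1) := by gcongr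
        _ ≤ exp (t ^ 2 * (K - 1)) := by linarith [add_one_le_exp (t ^ 2 * (K - 1))]
        _ ≤ exp (4 * K * t ^ 2 / 2) := exp_le_exp.2 (by nlinarith [sq_nonneg t])
    · calc mgf X μ t ≤ exp (t ^ 2 / 4) * ∫ ω, exp (X ω ^ 2) ∂μ :=
            mgf_le_exp_sq_div_four_mul hX.aestronglyMeasurable h t
        _ ≤ exp (t ^ 2 / 4) * exp (K - 1) := by gcongr; linarith [add_one_le_exp (K - 1)]
        _ = exp (t ^ 2 / 4 + (K - 1)) := (exp_add _ _).symm
        _ ≤ exp (4 * K * t ^ 2 / 2) := exp_le_exp.2 (by nlinarith)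

end SubGaussian

lemma exp_sum_le_one_add_sum_exp_card_mul {ι : Type*} (s : Finset ι) (y : ι → ℝ) :
    exp (∑ i ∈ s, y i) ≤ 1 + ∑ i ∈ s, exp (s.card * y i) := by
  rcases s.eq_empty_or_nonempty with rfl | hs
  · simp
  obtain ⟨j, hj, hmax⟩ := s.exists_max_image y hs
  calc exp (∑ i ∈ s, y i) ≤ exp (s.card * y j) :=
        exp_le_exp.2 (by simpa using Finset.sum_le_card_nsmul s y (y j) hmax)
    _ ≤ ∑ i ∈ s, exp (s.card * y i) :=
        Finset.single_le_sum (f := fun i => exp (s.card * y i)) (fun i _ => (exp_pos _).le) hj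
    _ ≤ 1 + ∑ i ∈ s, exp (s.card * y i) := le_add_of_nonneg_left zero_le_one

lemma integrable_exp_sum_mul {Ω ι : Type*} [MeasurableSpace Ω] {μ : Measure Ω} [IsFiniteMeasure μ]
    {X : ι → Ω → ℝ} (hX : ∀ i, AEStronglyMeasurable (X i) μ)
    (h : ∀ i t, Integrable (fun ω => exp (t * X i ω)) μ) (s : Finset ι) (c : ι → ℝ) :
    Integrable (fun ω => exp (∑ i ∈ s, c i * X i ω)) μ :=
  ((integrable_const 1).add (integrable_finsetSum s fun i _ => h i (s.card * c i))).mono'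
    (continuous_exp.comp_aestronglyMeasurable
      (Finset.aestronglyMeasurable_fun_sum s fun i _ => (hX i).const_mul (c i)))
    (ae_of_all _ fun ω => by
      rw [norm_of_nonneg (exp_pos _).le]
      simpa [mul_assoc] using exp_sum_le_one_add_sum_exp_card_mul s (fun i => c i * X i ω))

namespace ProbabilityTheory.HasSubgaussianMGF

variable {Ω : Type*} [MeasurableSpace Ω] {μ : Measure Ω} {X : Ω → ℝ} {c : ℝ≥0}

lemma mono (h : HasSubgaussianMGF X c μ) {c' : ℝ≥0} (hc : c ≤ c') :
    HasSubgaussianMGF X c' μ where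
  integrable_exp_mul := h.integrable_exp_mul
  mgf_le t := (h.mgf_le t).trans (exp_le_exp.2 (by gcongr))

lemma measure_abs_ge_le [IsFiniteMeasure μ] (h : HasSubgaussianMGF X c μ) {ε : ℝ} (hε : 0 ≤ ε) :
    μ.real {ω | ε ≤ |X ω|} ≤ 2 * exp (-ε ^ 2 / (2 * c)) :=
  calc μ.real {ω | ε ≤ |X ω|} ≤ μ.real ({ω | ε ≤ X ω} ∪ {ω | ε ≤ -X ω}) :=
        measureReal_mono fun ω (hω : ε ≤ |X ω|) => show ε ≤ X ω ∨ ε ≤ -X ω from le_abs.1 hω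
    _ ≤ μ.real {ω | ε ≤ X ω} + μ.real {ω | ε ≤ -X ω} := measureReal_union_le _ _
    _ ≤ exp (-ε ^ 2 / (2 * c)) + exp (-ε ^ 2 / (2 * c)) :=
        add_le_add (h.measure_ge_le hε) (h.neg.measure_ge_le hε)
    _ = 2 * exp (-ε ^ 2 / (2 * c)) := by ring

end ProbabilityTheory.HasSubgaussianMGF

lemma measureReal_abs_add_ge_le {Ω : Type*} [MeasurableSpace Ω] {μ : Measure Ω} [IsFiniteMeasure μ]
    (f g : Ω → ℝ) (a : ℝ) :
    μ.real {ω | a ≤ |f ω + g ω|} ≤ μ.real {ω | a / 2 ≤ |f ω|} + μ.real {ω | a / 2 ≤ |g ω|} := by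
  refine (measureReal_mono fun ω (hω : a ≤ |f ω + g ω|) => ?_).trans (measureReal_union_le _ _)
  by_contra! hne
  simp only [Set.mem_union, Set.mem_ofPred_eq, not_or, not_le] at hne
  linarith [abs_add_le (f ω) (g ω)]

namespace NegAssoc

variable {Ω : Type*} [MeasurableSpace Ω] {ℙ : Measure Ω} {N : ℕ} {X : Fin N → Ω → ℝ}

theorem comp_monotone (hX : NegAssoc ℙ X) {g : Fin N → ℝ → ℝ} (hg : ∀ i, Monotone (g i)) :
    NegAssoc ℙ fun i ω => g i (X i ω) := fun A₁ A₂ hA f₁ f₂ hf₁ hf₂ =>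
  hX A₁ A₂ hA (fun x => f₁ fun i => g i (x i)) (fun x => f₂ fun i => g i (x i))
    (fun _ _ h => hf₁ fun i => hg i (h i)) (fun _ _ h => hf₂ fun i => hg i (h i))

theorem comp_antitone (hX : NegAssoc ℙ X) {g : Fin N → ℝ → ℝ} (hg : ∀ i, Antitone (g i)) :
    NegAssoc ℙ fun i ω => g i (X i ω) := by
  intro A₁ A₂ hA f₁ f₂ hf₁ hf₂ hi₁ hi₂ hi₁₂
  have h := hX A₁ A₂ hA (fun x => -f₁ fun i => g i (x i)) (fun x => -f₂ fun i => g i (x i))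
    (fun _ _ h => neg_le_neg (hf₁ fun i => hg i (h i)))
    (fun _ _ h => neg_le_neg (hf₂ fun i => hg i (h i)))
    hi₁.neg hi₂.neg (by simpa only [neg_mul_neg] using hi₁₂)
  simpa only [neg_mul_neg, integral_neg] using h

theorem integral_exp_sum_union_le (hX : NegAssoc ℙ X) {s t : Finset (Fin N)} (hst : Disjoint s t)
    (hs : Integrable (fun ω => exp (∑ i ∈ s, X i ω)) ℙ)
    (ht : Integrable (fun ω => exp (∑ i ∈ t, X i ω)) ℙ)
    (hs_t : Integrable (fun ω => exp (∑ i ∈ s ∪ t, X i ω)) ℙ) :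
    ∫ ω, exp (∑ i ∈ s ∪ t, X i ω) ∂ℙ
      ≤ (∫ ω, exp (∑ i ∈ s, X i ω) ∂ℙ) * ∫ ω, exp (∑ i ∈ t, X i ω) ∂ℙ := by
  have hmono (u : Finset (Fin N)) : Monotone fun x : u → ℝ => exp (∑ i, x i) :=
    fun _ _ h => exp_le_exp.2 (Finset.sum_le_sum fun i _ => h i)
  have hsum (u : Finset (Fin N)) (ω : Ω) : ∑ i : u, X i ω = ∑ i ∈ u, X i ω :=
    Finset.sum_coe_sort u (X · ω)
  simp_rw [Finset.sum_union hst, exp_add] at hs_t ⊢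
  simpa only [hsum] using hX s t hst _ _ (hmono s) (hmono t)
    (by simpa only [hsum] using hs) (by simpa only [hsum] using ht)
    (by simpa only [hsum] using hs_t)

theorem integral_exp_sum_le_prod [IsProbabilityMeasure ℙ] (hX : NegAssoc ℙ X)
    (hint : ∀ s : Finset (Fin N), Integrable (fun ω => exp (∑ i ∈ s, X i ω)) ℙ)
    (s : Finset (Fin N)) :
    ∫ ω, exp (∑ i ∈ s, X i ω) ∂ℙ ≤ ∏ i ∈ s, ∫ ω, exp (X i ω) ∂ℙ := by
  classical
  induction s using Finset.induction_on with
  | empty => simp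
  | insert j s hj ih =>
    have hjs : Disjoint {j} s := Finset.disjoint_singleton_left.2 hj
    calc ∫ ω, exp (∑ i ∈ insert j s, X i ω) ∂ℙ
        ≤ (∫ ω, exp (∑ i ∈ {j}, X i ω) ∂ℙ) * ∫ ω, exp (∑ i ∈ s, X i ω) ∂ℙ := by
          rw [Finset.insert_eq]
          exact hX.integral_exp_sum_union_le hjs (hint _) (hint _) (hint _)
      _ ≤ (∫ ω, exp (X j ω) ∂ℙ) * ∏ i ∈ s, ∫ ω, exp (X i ω) ∂ℙ := by
          simp only [Finset.sum_singleton]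
          gcongr
      _ = ∏ i ∈ insert j s, ∫ ω, exp (X i ω) ∂ℙ := by
          rw [Finset.prod_insert hj]

theorem hasSubgaussianMGF_sum [IsProbabilityMeasure ℙ] (hX : NegAssoc ℙ X) {c : Fin N → ℝ≥0}
    (h : ∀ i, HasSubgaussianMGF (X i) (c i) ℙ) (s : Finset (Fin N)) :
    HasSubgaussianMGF (fun ω => ∑ i ∈ s, X i ω) (∑ i ∈ s, c i) ℙ := by
  have hint (t : ℝ) (u : Finset (Fin N)) : Integrable (fun ω => exp (∑ i ∈ u, t * X i ω)) ℙ :=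
    integrable_exp_sum_mul (fun i => (h i).aestronglyMeasurable) (fun i => (h i).integrable_exp_mul)
      u fun _ => t
  refine ⟨fun t => by simpa only [Finset.mul_sum] using hint t s, fun t => ?_⟩
  have hY : NegAssoc ℙ fun i ω => t * X i ω := by
    rcases le_total 0 t with ht | ht
    · exact hX.comp_monotone fun _ => monotone_mul_left_of_nonneg ht
    · exact hX.comp_antitone fun _ => antitone_mul_left ht
  calc mgf (fun ω => ∑ i ∈ s, X i ω) ℙ t = ∫ ω, exp (∑ i ∈ s, t * X i ω) ∂ℙ := by
        simp only [mgf, Finset.mul_sum]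
    _ ≤ ∏ i ∈ s, mgf (X i) ℙ t := hY.integral_exp_sum_le_prod (hint t) s
    _ ≤ ∏ i ∈ s, exp (c i * t ^ 2 / 2) :=
        Finset.prod_le_prod (fun i _ => ProbabilityTheory.mgf_nonneg) fun i _ => (h i).mgf_le t
    _ = exp ((∑ i ∈ s, c i : ℝ≥0) * t ^ 2 / 2) := by
        rw [← exp_sum]
        push_cast
        rw [Finset.sum_mul, Finset.sum_div]

theorem hasSubgaussianMGF_sum_mul [IsProbabilityMeasure ℙ] (hX : NegAssoc ℙ X) {c : ℝ≥0}
    (h : ∀ i, HasSubgaussianMGF (X i) c ℙ) {d : Fin N → ℝ} (hd : 0 ≤ d ∨ d ≤ 0) {G : ℝ≥0}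
    (hG : ∑ i, d i ^ 2 ≤ G) :
    HasSubgaussianMGF (fun ω => ∑ i, d i * X i ω) (c * G) ℙ := by
  have hY : NegAssoc ℙ fun i ω => d i * X i ω := hd.elim
    (fun hd => hX.comp_monotone fun i => monotone_mul_left_of_nonneg (hd i))
    (fun hd => hX.comp_antitone fun i => antitone_mul_left (hd i))
  refine (hY.hasSubgaussianMGF_sum (fun i => (h i).const_mul (d i)) Finset.univ).mono ?_
  apply NNReal.coe_le_coe.1
  push_cast
  calc _ = (∑ i, d i ^ 2) * (c : ℝ) := by rw [Finset.sum_mul]; rfl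
    _ ≤ c * G := by rw [mul_comm]; gcongr

theorem measureReal_abs_sum_mul_ge_le [IsProbabilityMeasure ℙ] (hX : NegAssoc ℙ X) {c : ℝ≥0}
    (h : ∀ i, HasSubgaussianMGF (X i) c ℙ) (γ : Fin N → ℝ) {a : ℝ} (ha : 0 ≤ a) :
    ℙ.real {ω | a ≤ |∑ i, X i ω * γ i|} ≤ 4 * exp (-a ^ 2 / (8 * c * ∑ i, γ i ^ 2)) := by
  set G := ∑ i, γ i ^ 2
  have hG : 0 ≤ G := Finset.sum_nonneg fun i _ => sq_nonneg (γ i)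
  have hsplit (ω : Ω) :
      ∑ i, X i ω * γ i = ∑ i, max (γ i) 0 * X i ω + ∑ i, min (γ i) 0 * X i ω := by
    rw [← Finset.sum_add_distrib]
    refine Finset.sum_congr rfl fun i _ => ?_
    rw [← add_mul, max_add_min, add_zero, mul_comm]
  have hsq (f : ℝ → ℝ) (hf : ∀ x, f x ^ 2 ≤ x ^ 2) : ∑ i, f (γ i) ^ 2 ≤ G.toNNReal := by
    rw [Real.coe_toNNReal _ hG]
    exact Finset.sum_le_sum fun i _ => hf (γ i)
  have hpos := hX.hasSubgaussianMGF_sum_mul h (d := fun i => max (γ i) 0)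
    (Or.inl fun i => le_max_right _ _) (hsq (max · 0) fun x => by
      rcases le_total x 0 with hx | hx <;> simp [hx, sq_nonneg])
  have hneg := hX.hasSubgaussianMGF_sum_mul h (d := fun i => min (γ i) 0)
    (Or.inr fun i => min_le_right _ _) (hsq (min · 0) fun x => by
      rcases le_total x 0 with hx | hx <;> simp [hx])
  calc ℙ.real {ω | a ≤ |∑ i, X i ω * γ i|}
      ≤ ℙ.real {ω | a / 2 ≤ |∑ i, max (γ i) 0 * X i ω|}
        + ℙ.real {ω | a / 2 ≤ |∑ i, min (γ i) 0 * X i ω|} := by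
        simp_rw [hsplit]
        exact measureReal_abs_add_ge_le _ _ a
    _ ≤ 2 * exp (-(a / 2) ^ 2 / (2 * (c * G.toNNReal : ℝ≥0)))
        + 2 * exp (-(a / 2) ^ 2 / (2 * (c * G.toNNReal : ℝ≥0))) :=
        add_le_add (hpos.measure_abs_ge_le (by positivity)) (hneg.measure_abs_ge_le (by positivity))
    _ = 4 * exp (-a ^ 2 / (8 * c * G)) := by
        rw [NNReal.coe_mul, Real.coe_toNNReal _ hG]
        ring_nf

end NegAssoc

theorem stmt_6_general {Ω : Type*} [MeasurableSpace Ω] (ℙ : Measure Ω) [IsProbabilityMeasure ℙ]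
    {N : ℕ} (W : Fin N → Ω → ℝ) (hNA : NegAssoc ℙ W)
    (hWint : ∀ i, Integrable (W i) ℙ)
    (hmean : ∀ i, ∫ ω, W i ω ∂ℙ = 0)
    (K₀ : ℝ) (hK₀ : 1 ≤ K₀)
    (hexpint : ∀ i, Integrable (fun ω => Real.exp ((W i ω) ^ 2)) ℙ)
    (hexp : ∀ i, ∫ ω, Real.exp ((W i ω) ^ 2) ∂ℙ ≤ K₀) :
    ∀ a : ℝ, 0 ≤ a → ∀ γ : Fin N → ℝ,
      (ℙ {ω | a ≤ |∑ i, W i ω * γ i|}).toReal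
        ≤ 4 * Real.exp (-a ^ 2 / (32 * K₀ * ∑ i, (γ i) ^ 2)) := by
  intro a ha γ
  have hW i := hasSubgaussianMGF_of_integral_exp_sq_le (hWint i) (hmean i) (hexpint i) (hexp i)
  have htail := hNA.measureReal_abs_sum_mul_ge_le hW γ ha
  rwa [Real.coe_toNNReal _ (by linarith), show 8 * (4 * K₀) = 32 * K₀ by ring] at htail

/-- Hoeffding-type inequality under negative association: if `W₁, …, W_N` are
negatively associated, mean zero, with `E[exp(Wᵢ²)] ≤ K₀`, then for every `a ≥ 0` and
reals `γᵢ`, `P(|∑ Wᵢγᵢ| ≥ a) ≤ C₃ exp(−a²/(C₄ ∑γᵢ²))` with `C₃ = 4` and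
`C₄ = 32(1 + σ₀²) = 32 K₀` (where `σ₀² = K₀ − 1`). -/
theorem stmt_6 {Ω : Type*} [MeasurableSpace Ω] (ℙ : Measure Ω) [IsProbabilityMeasure ℙ]
    {N : ℕ} (W : Fin N → Ω → ℝ) (hNA : NegAssoc ℙ W)
    (hmeas : ∀ i, Measurable (W i)) (hWint : ∀ i, Integrable (W i) ℙ)
    (hmean : ∀ i, ∫ ω, W i ω ∂ℙ = 0)
    (K₀ : ℝ) (hK₀ : 1 ≤ K₀)
    (hexpint : ∀ i, Integrable (fun ω => Real.exp ((W i ω) ^ 2)) ℙ)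
    (hexp : ∀ i, ∫ ω, Real.exp ((W i ω) ^ 2) ∂ℙ ≤ K₀) :
    ∀ a : ℝ, 0 ≤ a → ∀ γ : Fin N → ℝ,
      (ℙ {ω | a ≤ |∑ i, W i ω * γ i|}).toReal
        ≤ 4 * Real.exp (-a ^ 2 / (32 * K₀ * ∑ i, (γ i) ^ 2)) :=
  stmt_6_general ℙ W hNA hWint hmean K₀ hK₀ hexpint hexp
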